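/- arXiv:1812.08171 — 6 statements merged into one kernel-verified Lean document; each statement's English description precedes it below -/
import Mathlib

section
/- Let g₁, …, gₙ ∈ {0,1}. Then exp(iπ ∑_{1≤i<j≤n} g_i g_j) = (1/√2) ∑_{h∈{0,1}} exp(i(π/2)(1−2h) ∑_{i=1}^n g_i − i(π/4)(1−2h)). -/
/-!
Put `m = ∑ gᵢ`. Since the `gᵢ` are `0`/`1`, the pair sum counts the two-element subsets of
the support, so the left side is `(-1) ^ (m choose 2)`. With `exp (±iπ/2) = ±i` and
`exp (±iπ/4) = (1 ± i)/√2`, the sum over `h` is `((1 - i) iᵐ + (1 + i) (-i)ᵐ) / √2`, and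
`(1 - i) iᵐ + (1 + i) (-i)ᵐ = 2 (-1) ^ (m choose 2)` because both sides change sign when `m`
increases by `2`.
-/

open Complex Finset

theorem sum_filter_lt_mul_eq_choose_two {ι : Type*} [Fintype ι] [LinearOrder ι] (a : ι → ℕ)
    (ha : ∀ i, a i ≤ 1) :
    ∑ p ∈ univ.filter (fun p : ι × ι => p.1 < p.2), a p.1 * a p.2 = (∑ i, a i).choose 2 := by
  classical
  obtain ⟨s, rfl⟩ : ∃ s : Finset ι, a = fun i => if i ∈ s then 1 else 0 :=
    ⟨univ.filter (a · = 1), funext fun i => by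
      have := ha i; simp only [mem_filter, mem_univ, true_and]; split_ifs <;> omega⟩
  simp only [ite_mul, one_mul, zero_mul, ← ite_and, sum_boole, Nat.cast_id, filter_filter,
    filter_mem_eq_inter, univ_inter, ← card_product_filter_lt]
  congr 1
  ext p
  simp only [mem_filter, mem_univ, true_and, mem_product]
  tauto

theorem ofReal_sqrt_two_mul_self : (Real.sqrt 2 : ℂ) * Real.sqrt 2 = 2 := by
  rw [← ofReal_mul, Real.mul_self_sqrt zero_le_two, ofReal_ofNat]

theorem exp_pi_div_four_mul_I : exp (Real.pi / 4 * I) = (1 + I) / Real.sqrt 2 := by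
  rw [← ofReal_ofNat, ← ofReal_div, exp_mul_I, ← ofReal_cos, ← ofReal_sin,
    Real.cos_pi_div_four, Real.sin_pi_div_four]
  field_simp
  push_cast
  linear_combination (1 + I) / 2 * ofReal_sqrt_two_mul_self

theorem exp_neg_pi_div_four_mul_I : exp (-Real.pi / 4 * I) = (1 - I) / Real.sqrt 2 := by
  rw [← ofReal_ofNat, ← ofReal_neg, ← ofReal_div, exp_mul_I, ← ofReal_cos, ← ofReal_sin,
    neg_div, Real.cos_neg, Real.sin_neg, Real.cos_pi_div_four, Real.sin_pi_div_four]
  field_simp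
  push_cast
  linear_combination (1 - I) / 2 * ofReal_sqrt_two_mul_self

theorem one_sub_I_mul_I_pow_add_one_add_I_mul_neg_I_pow (m : ℕ) :
    (1 - I) * I ^ m + (1 + I) * (-I) ^ m = 2 * (-1) ^ m.choose 2 :=
  match m with
  | 0 => by norm_num
  | 1 => by norm_num; ring_nf; simp [I_sq]
  | m + 2 => by
    have hchoose : (m + 2).choose 2 = m.choose 2 + (2 * m + 1) := by
      simp [Nat.choose_succ_succ]; ring
    rw [hchoose, pow_add (-1 : ℂ), pow_succ (-1 : ℂ) (2 * m), pow_mul, neg_one_sq, one_pow,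
      pow_add I, pow_add (-I), neg_sq, I_sq]
    linear_combination -one_sub_I_mul_I_pow_add_one_add_I_mul_neg_I_pow m

theorem sum_hidden_spin_exp (m : ℕ) :
    ∑ h : Fin 2, exp (I * (Real.pi / 2) * (1 - 2 * ((h : ℕ) : ℂ)) * m
      - I * (Real.pi / 4) * (1 - 2 * ((h : ℕ) : ℂ))) = Real.sqrt 2 * (-1) ^ m.choose 2 := by
  have h0 : I * (Real.pi / 2) * (1 - 2 * (((0 : Fin 2) : ℕ) : ℂ)) * m
      - I * (Real.pi / 4) * (1 - 2 * (((0 : Fin 2) : ℕ) : ℂ))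
      = m * (Real.pi / 2 * I) + -Real.pi / 4 * I := by
    norm_num; ring
  have h1 : I * (Real.pi / 2) * (1 - 2 * (((1 : Fin 2) : ℕ) : ℂ)) * m
      - I * (Real.pi / 4) * (1 - 2 * (((1 : Fin 2) : ℕ) : ℂ))
      = m * (-Real.pi / 2 * I) + Real.pi / 4 * I := by
    norm_num; ring
  rw [Fin.sum_univ_two, h0, h1, exp_add, exp_add, exp_nat_mul, exp_nat_mul,
    exp_pi_div_two_mul_I, exp_neg_pi_div_two_mul_I, exp_pi_div_four_mul_I,
    exp_neg_pi_div_four_mul_I]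
  field_simp
  linear_combination one_sub_I_mul_I_pow_add_one_add_I_mul_neg_I_pow m
    - (-1) ^ m.choose 2 * ofReal_sqrt_two_mul_self

/-- Linearization of the symmetric quadratic expression in binary variables via one
hidden binary spin. -/
theorem exp_sym_linearize (n : ℕ) (g : Fin n → Fin 2) :
    Complex.exp ((Real.pi : ℂ) * Complex.I *
        ∑ p ∈ Finset.univ.filter (fun p : Fin n × Fin n => p.1 < p.2),
          ((g p.1 : ℕ) : ℂ) * ((g p.2 : ℕ) : ℂ)) =
      (1 / (Real.sqrt 2 : ℂ)) *
        ∑ h : Fin 2,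
          Complex.exp (Complex.I * ((Real.pi : ℂ) / 2) * (1 - 2 * ((h : ℕ) : ℂ)) *
              (∑ i, ((g i : ℕ) : ℂ))
            - Complex.I * ((Real.pi : ℂ) / 4) * (1 - 2 * ((h : ℕ) : ℂ))) := by
  have hpairs : ∑ p ∈ univ.filter (fun p : Fin n × Fin n => p.1 < p.2),
      ((g p.1 : ℕ) : ℂ) * ((g p.2 : ℕ) : ℂ) = ((∑ i, (g i : ℕ)).choose 2 : ℕ) := by
    exact_mod_cast sum_filter_lt_mul_eq_choose_two (fun i => (g i : ℕ))
      fun i => Nat.le_of_lt_succ (g i).isLt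
  rw [hpairs, ← Nat.cast_sum, sum_hidden_spin_exp, mul_comm, exp_nat_mul, exp_pi_mul_I]
  field_simp
end

section
/- Let U₁, …, U_{2n} be operators on a finite-dimensional complex vector space such that U_{2k-1} and U_{2k} anticommute for each k = 1,…,n, all other pairs commute, and each U_i is invertible with U_i² a nonzero scalar. Then any irreducible representation of the algebra generated by U₁,…,U_{2n} has dimension 2^n. -/
set_option maxHeartbeats 1000000

open Module

universe u

theorem clifford_aux : ∀ (n : ℕ) {V : Type u} [AddCommGroup V] [Module ℂ V]
    [FiniteDimensional ℂ V] [Nontrivial V]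
    (U : Fin (2 * n) → (V →ₗ[ℂ] V)),
    (∀ i j : Fin (2 * n), (i : ℕ) / 2 = (j : ℕ) / 2 → i ≠ j →
      U i * U j = -(U j * U i)) →
    (∀ i j : Fin (2 * n), (i : ℕ) / 2 ≠ (j : ℕ) / 2 → U i * U j = U j * U i) →
    (∀ i, ∃ c : ℂ, c ≠ 0 ∧ U i * U i = c • (1 : V →ₗ[ℂ] V)) →
    (∀ i, IsUnit (U i)) →
    (∀ W : Submodule ℂ V, (∀ i, W.map (U i) ≤ W) → W = ⊥ ∨ W = ⊤) →
    Module.finrank ℂ V = 2 ^ n := fun n => by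
  induction n with
  | zero =>
    intro V _ _ _ _ U hanti hcomm hsq hinv hirr
    obtain ⟨v, hv⟩ := exists_ne (0 : V)
    have h := hirr (Submodule.span ℂ {v}) (fun i => i.elim0)
    rcases h with h | h
    · exact absurd (Submodule.span_eq_bot.mp h v rfl) hv
    · rw [pow_zero, ← finrank_top ℂ V, ← h, finrank_span_singleton hv]
  | succ m ih =>
    intro V _ _ _ _ U hanti hcomm hsq hinv hirr
    set i0 : Fin (2*(m+1)) := ⟨0, by omega⟩ with hi0
    set i1 : Fin (2*(m+1)) := ⟨1, by omega⟩ with hi1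
    set A := U i0 with hA
    set B := U i1 with hB
    have hAB : A * B = -(B * A) := hanti i0 i1 (by simp [i0, i1]) (by simp [i0, i1, Fin.ext_iff])
    obtain ⟨a, ha0, hAsq⟩ := hsq i0
    obtain ⟨b, hb0, hBsq⟩ := hsq i1
    obtain ⟨r, hr⟩ : ∃ r : ℂ, r ^ 2 = a := IsAlgClosed.exists_pow_nat_eq a two_pos
    have hr0 : r ≠ 0 := fun h => ha0 (by rw [← hr, h]; ring)
    set Vp := LinearMap.ker (A - r • (1 : V →ₗ[ℂ] V)) with hVp
    set Vm := LinearMap.ker (A + r • (1 : V →ₗ[ℂ] V)) with hVm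
    have memVp : ∀ x : V, x ∈ Vp ↔ A x = r • x := by
      intro x
      simp [hVp, LinearMap.mem_ker, sub_eq_zero, LinearMap.sub_apply, LinearMap.smul_apply]
    have memVm : ∀ x : V, x ∈ Vm ↔ A x = -(r • x) := by
      intro x
      simp [hVm, LinearMap.mem_ker, add_eq_zero_iff_eq_neg, LinearMap.add_apply,
        LinearMap.smul_apply]
    have hA2 : ∀ x : V, A (A x) = (r^2) • x := by
      intro x
      have := congrFun (congrArg DFunLike.coe hAsq) x
      simpa [Module.End.mul_apply, hr] using this
    -- decomposition
    have hdecomp : ∀ v : V, ((2*r)⁻¹ • (A v + r • v)) ∈ Vp ∧ ((2*r)⁻¹ • (r • v - A v)) ∈ Vm ∧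
        v = (2*r)⁻¹ • (A v + r • v) + (2*r)⁻¹ • (r • v - A v) := by
      intro v
      refine ⟨?_, ?_, ?_⟩
      · rw [memVp, map_smul, map_add, map_smul, hA2]
        match_scalars <;> field_simp <;> ring
      · rw [memVm, map_smul, map_sub, map_smul, hA2]
        match_scalars <;> field_simp <;> ring
      · rw [← smul_add]
        have : A v + r • v + (r • v - A v) = (2*r) • v := by
          rw [two_mul, add_smul]; abel
        rw [this, smul_smul, inv_mul_cancel₀ (by simpa using mul_ne_zero two_ne_zero hr0), one_smul]
    have hsup : Vp ⊔ Vm = ⊤ := by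
      rw [eq_top_iff]
      intro v _
      obtain ⟨h1, h2, h3⟩ := hdecomp v
      rw [h3]
      exact Submodule.add_mem_sup h1 h2
    have hinf : Vp ⊓ Vm = ⊥ := by
      rw [eq_bot_iff]
      rintro x ⟨hx1, hx2⟩
      rw [Submodule.mem_bot]
      have h1 := (memVp x).mp hx1
      have h2 := (memVm x).mp hx2
      have h3 : r • x + r • x = 0 := eq_neg_iff_add_eq_zero.mp (h1.symm.trans h2)
      have : (2 * r) • x = 0 := by rw [two_mul, add_smul]; exact h3
      have h2r : (2:ℂ) * r ≠ 0 := mul_ne_zero two_ne_zero hr0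
      simpa [h2r] using (smul_eq_zero.mp this)
    have hrank : finrank ℂ V = finrank ℂ Vp + finrank ℂ Vm := by
      have := Submodule.finrank_sup_add_finrank_inf_eq Vp Vm
      rw [hsup, hinf] at this
      simp only [finrank_top, finrank_bot, add_zero] at this
      omega
    -- B swaps eigenspaces
    have hABapp : ∀ x : V, A (B x) = -(B (A x)) := by
      intro x
      have := congrFun (congrArg DFunLike.coe hAB) x
      simpa [Module.End.mul_apply] using this
    have hBpm : ∀ x ∈ Vp, B x ∈ Vm := by
      intro x hx
      rw [memVm]
      rw [hABapp, (memVp x).mp hx, map_smul]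
    have hBmp : ∀ x ∈ Vm, B x ∈ Vp := by
      intro x hx
      rw [memVp]
      rw [hABapp, (memVm x).mp hx, map_neg, map_smul, neg_neg]
    -- inverse of B
    set uB := (hinv i1).unit with huB
    set Binv : V →ₗ[ℂ] V := ↑(uB⁻¹) with hBinv
    have hBiB : ∀ x : V, Binv (B x) = x := by
      intro x
      have : (Binv * B) = 1 := by
        rw [hBinv, hB]
        have : (uB : V →ₗ[ℂ] V) = U i1 := (hinv i1).unit_spec
        rw [← this]
        exact_mod_cast uB.inv_mul
      have := congrFun (congrArg DFunLike.coe this) x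
      simpa [Module.End.mul_apply] using this
    have hBBi : ∀ x : V, B (Binv x) = x := by
      intro x
      have : (B * Binv) = 1 := by
        rw [hBinv, hB]
        have : (uB : V →ₗ[ℂ] V) = U i1 := (hinv i1).unit_spec
        rw [← this]
        exact_mod_cast uB.mul_inv
      have := congrFun (congrArg DFunLike.coe this) x
      simpa [Module.End.mul_apply] using this
    have hBimp : ∀ x ∈ Vm, Binv x ∈ Vp := by
      intro x hx
      rw [memVp]
      have : A (B (Binv x)) = -(B (A (Binv x))) := hABapp _
      rw [hBBi] at this
      have h2 := (memVm x).mp hx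
      rw [h2] at this
      have h4 : B (A (Binv x)) = r • x := by
        rw [← neg_eq_iff_eq_neg] at this
        rw [← this, neg_neg]
      calc A (Binv x) = Binv (B (A (Binv x))) := (hBiB _).symm
        _ = Binv (r • x) := by rw [h4]
        _ = r • Binv x := map_smul _ _ _
    -- equivalence Vp ≃ Vm
    have hfr : finrank ℂ Vp = finrank ℂ Vm := by
      have e : Vp ≃ₗ[ℂ] Vm := by
        refine LinearEquiv.ofLinear (B.restrict hBpm) (Binv.restrict hBimp) ?_ ?_
        · ext x
          simp [LinearMap.restrict_apply, hBBi]
        · ext x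
          simp [LinearMap.restrict_apply, hBiB]
      exact e.finrank_eq
    -- injectivity of U i
    have hUinj : ∀ (i : Fin (2*(m+1))) (x : V), U i x = 0 → x = 0 := by
      intro i x hx
      obtain ⟨u, hu⟩ := hinv i
      have h1 : (↑(u⁻¹) : V →ₗ[ℂ] V) * U i = 1 := by
        rw [← hu]; exact u.inv_mul
      have h2 := congrFun (congrArg DFunLike.coe h1) x
      simp only [Module.End.mul_apply, Module.End.one_apply, hx, map_zero] at h2
      exact h2.symm
    -- Nontrivial Vp
    have hBinj : ∀ x : V, B x = 0 → x = 0 := fun x hx => by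
      rw [← hBiB x, hx, map_zero]
    have hVpne : ∃ x : V, x ∈ Vp ∧ x ≠ 0 := by
      by_contra hcon
      push_neg at hcon
      have hAv : ∀ v : V, A v + r • v = 0 := by
        intro v
        obtain ⟨h1, _, _⟩ := hdecomp v
        have h4 : ((2:ℂ)*r)⁻¹ • (A v + r • v) = 0 := hcon _ h1
        have h2r : ((2:ℂ)*r)⁻¹ ≠ 0 := inv_ne_zero (mul_ne_zero two_ne_zero hr0)
        exact (smul_eq_zero.mp h4).resolve_left h2r
      obtain ⟨v, hv⟩ := exists_ne (0 : V)
      have h1 : A (B v) = r • B v := by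
        rw [hABapp]
        have h5 : A v = -(r • v) := eq_neg_of_add_eq_zero_left (hAv v)
        rw [h5, map_neg, map_smul, neg_neg]
      have h2 := hAv (B v)
      rw [h1] at h2
      have h3 : ((2:ℂ)*r) • B v = 0 := by rw [two_mul, add_smul]; exact h2
      have h6 : B v = 0 := (smul_eq_zero.mp h3).resolve_left (mul_ne_zero two_ne_zero hr0)
      exact hv (hBinj v h6)
    obtain ⟨x0, hx0mem, hx0⟩ := hVpne
    haveI : Nontrivial Vp := ⟨⟨x0, hx0mem⟩, 0, by simpa [Subtype.ext_iff] using hx0⟩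
    -- the restricted family
    set emb : Fin (2*m) → Fin (2*(m+1)) := fun k => ⟨(k:ℕ)+2, by omega⟩ with hemb
    have hdiv : ∀ k : Fin (2*m), ((emb k : ℕ))/2 = (k:ℕ)/2 + 1 := fun k =>
      Nat.add_div_right _ two_pos
    have hcommA : ∀ k : Fin (2*m), U (emb k) * A = A * U (emb k) := by
      intro k
      refine hcomm _ _ ?_
      rw [hdiv]
      simp [i0]
    have happA : ∀ (k : Fin (2*m)) (x : V), U (emb k) (A x) = A (U (emb k) x) := by
      intro k x
      have := congrFun (congrArg DFunLike.coe (hcommA k)) x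
      simpa [Module.End.mul_apply] using this
    have hpres : ∀ k : Fin (2*m), ∀ x ∈ Vp, U (emb k) x ∈ Vp := by
      intro k x hx
      rw [memVp, ← happA, (memVp x).mp hx, map_smul]
    set U' : Fin (2*m) → (Vp →ₗ[ℂ] Vp) := fun k => (U (emb k)).restrict (hpres k) with hU'
    have hU'app : ∀ (k : Fin (2*m)) (x : Vp), ((U' k x : V)) = U (emb k) (x : V) := by
      intro k x
      simp [hU', LinearMap.restrict_coe_apply]
    -- relations for the restricted family
    have hanti' : ∀ i j : Fin (2*m), (i : ℕ)/2 = (j : ℕ)/2 → i ≠ j →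
        U' i * U' j = -(U' j * U' i) := by
      intro i j hij hne
      have h1 : ((emb i : ℕ))/2 = ((emb j : ℕ))/2 := by rw [hdiv, hdiv, hij]
      have h2 : emb i ≠ emb j := by
        intro h
        exact hne (Fin.ext (by simpa [hemb, Fin.ext_iff] using h))
      have hpt := congrFun (congrArg DFunLike.coe (hanti (emb i) (emb j) h1 h2))
      ext x
      have h3 := hpt (x : V)
      simp only [Module.End.mul_apply, LinearMap.neg_apply] at h3
      simp only [Module.End.mul_apply, LinearMap.neg_apply]
      simpa [hU'app] using h3
    have hcomm' : ∀ i j : Fin (2*m), (i : ℕ)/2 ≠ (j : ℕ)/2 →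
        U' i * U' j = U' j * U' i := by
      intro i j hij
      have h1 : ((emb i : ℕ))/2 ≠ ((emb j : ℕ))/2 := by rw [hdiv, hdiv]; omega
      have hpt := congrFun (congrArg DFunLike.coe (hcomm (emb i) (emb j) h1))
      ext x
      have h3 := hpt (x : V)
      simp only [Module.End.mul_apply] at h3
      simp only [Module.End.mul_apply]
      simpa [hU'app] using h3
    have hsq' : ∀ i, ∃ c : ℂ, c ≠ 0 ∧ U' i * U' i = c • (1 : Vp →ₗ[ℂ] Vp) := by
      intro i
      obtain ⟨c, hc0, hc⟩ := hsq (emb i)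
      refine ⟨c, hc0, ?_⟩
      have hpt := congrFun (congrArg DFunLike.coe hc)
      ext x
      have h3 := hpt (x : V)
      simp only [Module.End.mul_apply, LinearMap.smul_apply, Module.End.one_apply] at h3
      simp only [Module.End.mul_apply, LinearMap.smul_apply, Module.End.one_apply]
      rw [hU'app, hU'app, Submodule.coe_smul]
      exact h3
    have hinv' : ∀ i, IsUnit (U' i) := by
      intro k
      rw [Module.End.isUnit_iff]
      have hinj : Function.Injective (U' k) := by
        intro x y hxy
        have h1 : U (emb k) (x : V) = U (emb k) (y : V) := by
          rw [← hU'app, ← hU'app, hxy]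
        have h2 : U (emb k) ((x : V) - (y : V)) = 0 := by rw [map_sub, h1, sub_self]
        exact Subtype.ext (sub_eq_zero.mp (hUinj _ _ h2))
      exact ⟨hinj, LinearMap.injective_iff_surjective.mp hinj⟩
    -- irreducibility of the restricted representation
    have hBsqApp : ∀ x : V, B (B x) = b • x := by
      intro x
      have := congrFun (congrArg DFunLike.coe hBsq) x
      simpa [Module.End.mul_apply] using this
    have hcommB : ∀ k : Fin (2*m), U (emb k) * B = B * U (emb k) := by
      intro k
      refine hcomm _ _ ?_
      rw [hdiv]
      simp [i1]
    have happB : ∀ (k : Fin (2*m)) (x : V), U (emb k) (B x) = B (U (emb k) x) := by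
      intro k x
      have := congrFun (congrArg DFunLike.coe (hcommB k)) x
      simpa [Module.End.mul_apply] using this
    have hirr' : ∀ W : Submodule ℂ Vp, (∀ k, W.map (U' k) ≤ W) → W = ⊥ ∨ W = ⊤ := by
      intro W hW
      set W0 := W.map Vp.subtype with hW0def
      have hW0le : W0 ≤ Vp := Submodule.map_subtype_le Vp W
      set Wb := W0.map B with hWbdef
      have hWble : Wb ≤ Vm := by
        rintro y ⟨x, hx, rfl⟩
        exact hBpm x (hW0le hx)
      -- stability statements
      have st0a : ∀ x ∈ W0, A x ∈ W0 := by
        intro x hx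
        rw [(memVp x).mp (hW0le hx)]
        exact W0.smul_mem r hx
      have st0b : ∀ x ∈ Wb, A x ∈ Wb := by
        rintro y ⟨x, hx, rfl⟩
        rw [hABapp, (memVp x).mp (hW0le hx), map_smul, ← neg_smul]
        exact Wb.smul_mem (-r) ⟨x, hx, rfl⟩
      have st1b : ∀ x ∈ Wb, B x ∈ W0 := by
        rintro y ⟨x, hx, rfl⟩
        rw [hBsqApp]
        exact W0.smul_mem b hx
      have st2a : ∀ (k : Fin (2*m)), ∀ x ∈ W0, U (emb k) x ∈ W0 := by
        rintro k y ⟨x, hx, rfl⟩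
        refine ⟨U' k x, hW k ⟨x, hx, rfl⟩, ?_⟩
        exact (hU'app k x).symm ▸ rfl
      have st2b : ∀ (k : Fin (2*m)), ∀ x ∈ Wb, U (emb k) x ∈ Wb := by
        rintro k y ⟨x, hx, rfl⟩
        rw [happB]
        exact ⟨U (emb k) x, st2a k x hx, rfl⟩
      have hWinv : ∀ i : Fin (2*(m+1)), (W0 ⊔ Wb).map (U i) ≤ W0 ⊔ Wb := by
        intro i
        have key : ∀ x ∈ W0 ⊔ Wb, U i x ∈ W0 ⊔ Wb := by
          intro x hx
          obtain ⟨w, hw, z, hz, rfl⟩ := Submodule.mem_sup.mp hx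
          rw [map_add]
          by_cases h0 : i = i0
          · subst h0
            exact Submodule.add_mem_sup (st0a w hw) (st0b z hz)
          · by_cases h1 : i = i1
            · subst h1
              refine Submodule.add_mem _ ?_ ?_
              · exact Submodule.mem_sup_right ⟨w, hw, rfl⟩
              · exact Submodule.mem_sup_left (st1b z hz)
            · have hge : 2 ≤ (i : ℕ) := by
                rcases Nat.lt_or_ge (i : ℕ) 2 with h | h
                · interval_cases hi : (i : ℕ)
                  · exact absurd (Fin.ext hi) h0
                  · exact absurd (Fin.ext hi) h1
                · exact h
              set k : Fin (2*m) := ⟨(i : ℕ) - 2, by omega⟩ with hk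
              have hik : emb k = i := Fin.ext (by simp [hemb, hk]; omega)
              rw [← hik]
              exact Submodule.add_mem _ (Submodule.mem_sup_left (st2a k w hw)) (Submodule.mem_sup_right (st2b k z hz))
        rintro y ⟨x, hx, rfl⟩
        exact key x hx
      have hsubinj := Submodule.map_injective_of_injective (Submodule.injective_subtype Vp)
      rcases hirr (W0 ⊔ Wb) hWinv with h | h
      · left
        have hW0bot : W0 = ⊥ := le_bot_iff.mp (le_trans le_sup_left h.le)
        apply hsubinj
        rw [← hW0def, hW0bot, Submodule.map_bot]
      · right
        have hVpleW0 : Vp ≤ W0 := by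
          intro v hv
          have hv' : v ∈ W0 ⊔ Wb := h.symm ▸ Submodule.mem_top
          obtain ⟨w, hw, z, hz, rfl⟩ := Submodule.mem_sup.mp hv'
          have hzVp : z ∈ Vp := by
            have : z = (w + z) - w := by abel
            rw [this]
            exact Submodule.sub_mem Vp hv (hW0le hw)
          have hz0 : z = 0 := by
            have : z ∈ Vp ⊓ Vm := ⟨hzVp, hWble hz⟩
            rw [hinf] at this
            simpa using this
          rw [hz0, add_zero]
          exact hw
        have hW0eq : W0 = Vp := le_antisymm hW0le hVpleW0
        apply hsubinj
        rw [← hW0def, hW0eq, Submodule.map_subtype_top]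
    have hrankVp := ih U' hanti' hcomm' hsq' hinv' hirr'
    rw [hrank, ← hfr, hrankVp, pow_succ]
    ring

/-- An irreducible representation of `n` decoupled anticommuting pairs of invertible
operators (a generalized Clifford algebra) has dimension `2^n`. -/
theorem clifford_pairs_irrep_dim (n : ℕ)
    (V : Type*) [AddCommGroup V] [Module ℂ V] [FiniteDimensional ℂ V] [Nontrivial V]
    (U : Fin (2 * n) → (V →ₗ[ℂ] V))
    (hanti : ∀ i j : Fin (2 * n), (i : ℕ) / 2 = (j : ℕ) / 2 → i ≠ j →
      U i * U j = -(U j * U i))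
    (hcomm : ∀ i j : Fin (2 * n), (i : ℕ) / 2 ≠ (j : ℕ) / 2 →
      U i * U j = U j * U i)
    (hsq : ∀ i, ∃ c : ℂ, c ≠ 0 ∧ U i * U i = c • (1 : V →ₗ[ℂ] V))
    (hinv : ∀ i, IsUnit (U i))
    (hirr : ∀ W : Submodule ℂ V, (∀ i, W.map (U i) ≤ W) → W = ⊥ ∨ W = ⊤) :
    Module.finrank ℂ V = 2 ^ n := by
  exact clifford_aux n U hanti hcomm hsq hinv hirr
end

section
/- Let T be a nonzero D×D complex matrix and U₁, …, U_N be D×D matrices, each a tensor product of Pauli matrices (possibly with scalar factors ±1, ±i), that are independent (no product of a subset of them is a scalar multiple of the identity) and satisfy T·U_k = c_k T for scalars c_k with |c_k| = 1, for k = 1,…,N. Then rank(T) ≤ D / 2^N. -/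
open Matrix

noncomputable def pauli : Fin 4 → Matrix (Fin 2) (Fin 2) ℂ :=
  ![1, !![0, 1; 1, 0], !![0, -Complex.I; Complex.I, 0], !![1, 0; 0, -1]]

/-- Tensor product of `n` Pauli matrices, as a `2^n × 2^n` matrix indexed by bit
strings. -/
noncomputable def pauliTensor {n : ℕ} (σ : Fin n → Fin 4) :
    Matrix (Fin n → Fin 2) (Fin n → Fin 2) ℂ :=
  fun x y => ∏ i, pauli (σ i) (x i) (y i)

/-!
Normalising `Q k = (c k)⁻¹ • U k` gives `T * Q k = T`. Phased Pauli tensors square to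
scalars and commute up to scalars, and a scalar `z` with `T * (z • X) = T = T * X` must be `1`
as `T ≠ 0`; hence the `Q k` are commuting involutions. So `P = ∏ (1 + Q k) / 2` is an
idempotent with `T * P = T`, whence `rank T ≤ rank P = trace P`. Expanding the product, every
nonempty product of distinct `Q k` is a non-scalar Pauli tensor by independence, hence
traceless, and `trace P = 2 ^ n / 2 ^ N`.
-/

theorem List.prod_map_smul {ι R A : Type*} [CommMonoid R] [Monoid A] [MulAction R A]
    [IsScalarTower R A A] [SMulCommClass R A A] (l : List ι) (c : ι → R) (f : ι → A) :
    (l.map fun i => c i • f i).prod = (l.map c).prod • (l.map f).prod := by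
  induction l with
  | nil => simp
  | cons i l ih => rw [List.map_cons, List.prod_cons, ih, smul_mul_smul_comm]; rfl

section Algebra

variable {K A : Type*} [Field K] [Ring A] [Algebra K A]

theorem mul_eq_smul_mul_of_mul_self {X Y : A} {a : K} (hX : X * X = 1) (hY : Y * Y = 1)
    (hXY : X * Y * (X * Y) = a • 1) : X * Y = a • (Y * X) := by
  have hinv : X * Y * (Y * X) = 1 := by rw [mul_assoc, ← mul_assoc Y, hY, one_mul, hX]
  calc X * Y = X * Y * (X * Y) * (Y * X) := by rw [mul_assoc (X * Y) (X * Y), hinv, mul_one]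
    _ = a • (Y * X) := by rw [hXY, smul_one_mul]

theorem eq_one_of_mul_smul_eq_self {T X : A} {z : K} (hT : T ≠ 0) (hX : T * X = T)
    (h : T * (z • X) = T) : z = 1 :=
  smul_left_injective K hT <| by simpa [mul_smul_comm, hX] using h

theorem isIdempotentElem_half_one_add [NeZero (2 : K)] {Q : A} (hQ : Q * Q = 1) :
    IsIdempotentElem ((2⁻¹ : K) • (1 + Q)) := by
  have : (1 + Q) * (1 + Q) = (2 : K) • (1 + Q) := by
    rw [two_smul, add_mul, mul_add, mul_add, hQ]; noncomm_ring
  rw [IsIdempotentElem, smul_mul_smul_comm, this, smul_smul, mul_assoc,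
    inv_mul_cancel₀ two_ne_zero, mul_one]

theorem isIdempotentElem_list_prod {l : List A} (hcomm : l.Pairwise Commute)
    (hl : ∀ P ∈ l, IsIdempotentElem P) : IsIdempotentElem l.prod := by
  induction l with
  | nil => exact IsIdempotentElem.one
  | cons P l ih =>
    rw [List.pairwise_cons] at hcomm
    rw [List.prod_cons]
    exact IsIdempotentElem.mul_of_commute (Commute.list_prod_right l P hcomm.1) (hl P (by simp))
      (ih hcomm.2 fun Q hQ => hl Q (by simp [hQ]))

end Algebra

namespace Matrix

variable {ι R : Type*} [Fintype ι] [CommSemiring R] {m n p : ι → Type*}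

def piKronecker (A : ∀ i, Matrix (m i) (n i) R) : Matrix (∀ i, m i) (∀ i, n i) R :=
  of fun x y => ∏ i, A i (x i) (y i)

theorem piKronecker_mul [DecidableEq ι] [∀ i, Fintype (n i)] (A : ∀ i, Matrix (m i) (n i) R)
    (B : ∀ i, Matrix (n i) (p i) R) :
    piKronecker A * piKronecker B = piKronecker fun i => A i * B i := by
  ext x y
  simp only [mul_apply, piKronecker, of_apply, Fintype.prod_sum, Finset.prod_mul_distrib]

theorem piKronecker_one [∀ i, DecidableEq (m i)] :
    piKronecker (fun i => (1 : Matrix (m i) (m i) R)) = 1 := by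
  ext x y
  simp [piKronecker, one_apply, Fintype.prod_boole, funext_iff]

theorem piKronecker_smul (c : ι → R) (A : ∀ i, Matrix (m i) (n i) R) :
    piKronecker (fun i => c i • A i) = (∏ i, c i) • piKronecker A := by
  ext x y
  simp [piKronecker, Finset.prod_mul_distrib]

theorem trace_piKronecker [DecidableEq ι] [∀ i, Fintype (m i)]
    (A : ∀ i, Matrix (m i) (m i) R) :
    (piKronecker A).trace = ∏ i, (A i).trace := by
  simp [piKronecker, trace, Fintype.prod_sum]

section Projector

variable {K : Type*} [Field K] {D : Type*} [Fintype D] [DecidableEq D]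

theorem rank_eq_trace_of_isIdempotentElem {P : Matrix D D K} (hP : IsIdempotentElem P) :
    (P.rank : K) = P.trace := by
  have hP' : IsIdempotentElem (toLin' P) := hP.map toLinAlgEquiv'
  rw [rank, ← trace_toLin'_eq, ← toLin'_apply',
    (LinearMap.IsIdempotentElem.isProj_range _ hP').trace]

theorem trace_mul_prod_half_one_add (l : List (Matrix D D K)) (M : Matrix D D K)
    (h : ∀ s, s.Sublist l → s ≠ [] → (M * s.prod).trace = 0) :
    (M * (l.map fun Q => (2⁻¹ : K) • (1 + Q)).prod).trace = M.trace / 2 ^ l.length := by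
  induction l generalizing M with
  | nil => simp
  | cons Q l ih =>
    have hM := ih M fun s hs hne => h s (hs.cons Q) hne
    have hMQ := ih (M * Q) fun s hs _ => by
      simpa [mul_assoc] using h (Q :: s) (hs.cons_cons Q) (List.cons_ne_nil _ _)
    have hQ : (M * Q).trace = 0 := by simpa using h [Q] (by simp) (by simp)
    rw [List.map_cons, List.prod_cons, ← mul_assoc, mul_smul_comm, mul_add, mul_one,
      smul_mul_assoc, add_mul, trace_smul, trace_add, hM, hMQ, hQ, zero_div, add_zero,
      smul_eq_mul, List.length_cons, pow_succ]
    ring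

theorem rank_mul_two_pow_le_card [CharZero K] {T : Matrix D D K} {l : List (Matrix D D K)}
    (hcomm : l.Pairwise Commute) (hinv : ∀ Q ∈ l, Q * Q = 1)
    (htr : ∀ s, s.Sublist l → s ≠ [] → s.prod.trace = 0) (hT : ∀ Q ∈ l, T * Q = T) :
    T.rank * 2 ^ l.length ≤ Fintype.card D := by
  set P := (l.map fun Q => (2⁻¹ : K) • (1 + Q)).prod
  have hP : IsIdempotentElem P := by
    refine isIdempotentElem_list_prod ?_ ?_
    · refine hcomm.map _ fun Q Q' h => ?_
      exact (((Commute.one_right _).add_right ((Commute.one_left Q').add_left h)).smul_left _)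
        |>.smul_right _
    · exact List.forall_mem_map.mpr fun Q hQ => isIdempotentElem_half_one_add (hinv Q hQ)
  have hTP : T * P = T :=
    List.prod_induction (fun X => T * X = T) (fun X Y hX hY => by rw [← mul_assoc, hX, hY])
      (mul_one T) <| List.forall_mem_map.mpr fun Q hQ => by
        rw [mul_smul_comm, mul_add, mul_one, hT Q hQ, ← two_smul K T, smul_smul,
          inv_mul_cancel₀ two_ne_zero, one_smul]
  have htrP : P.trace = Fintype.card D / 2 ^ l.length := by
    have := trace_mul_prod_half_one_add l 1 (by simpa using htr)
    rwa [one_mul, trace_one] at this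
  have hrankP : P.rank * 2 ^ l.length = Fintype.card D := by
    exact_mod_cast (eq_div_iff (pow_ne_zero _ two_ne_zero)).mp
      ((rank_eq_trace_of_isIdempotentElem hP).trans htrP)
  calc T.rank * 2 ^ l.length = (T * P).rank * 2 ^ l.length := by rw [hTP]
    _ ≤ P.rank * 2 ^ l.length := Nat.mul_le_mul_right _ (rank_mul_le_right T P)
    _ = Fintype.card D := hrankP

end Projector

end Matrix

theorem pauli_mul_self (a : Fin 4) : pauli a * pauli a = 1 := by
  fin_cases a <;>
  · ext i j
    fin_cases i <;> fin_cases j <;> simp [pauli, mul_apply, Fin.sum_univ_two]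

theorem exists_pauli_mul_eq_smul (a b : Fin 4) :
    ∃ (z : ℂ) (d : Fin 4), pauli a * pauli b = z • pauli d := by
  refine ⟨![![1, 1, 1, 1], ![1, 1, Complex.I, -Complex.I], ![1, -Complex.I, 1, Complex.I],
    ![1, Complex.I, -Complex.I, 1]] a b, a ^^^ b, ?_⟩
  fin_cases a <;> fin_cases b <;>
  · ext i j
    fin_cases i <;> fin_cases j <;> simp [pauli, mul_apply, Fin.sum_univ_two]

theorem trace_pauli {a : Fin 4} (ha : a ≠ 0) : (pauli a).trace = 0 := by
  fin_cases a <;> simp_all [pauli, trace, Fin.sum_univ_two]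

section PauliTensor

variable {n : ℕ}

theorem pauliTensor_eq_piKronecker (σ : Fin n → Fin 4) :
    pauliTensor σ = piKronecker fun i => pauli (σ i) := rfl

theorem pauliTensor_zero : pauliTensor (0 : Fin n → Fin 4) = 1 :=
  piKronecker_one

theorem pauliTensor_mul_self (σ : Fin n → Fin 4) : pauliTensor σ * pauliTensor σ = 1 := by
  simp only [pauliTensor_eq_piKronecker, piKronecker_mul, pauli_mul_self, piKronecker_one]

theorem exists_pauliTensor_mul_eq_smul (σ τ : Fin n → Fin 4) :
    ∃ (z : ℂ) (ρ : Fin n → Fin 4), pauliTensor σ * pauliTensor τ = z • pauliTensor ρ := by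
  choose z d hzd using exists_pauli_mul_eq_smul
  refine ⟨∏ i, z (σ i) (τ i), fun i => d (σ i) (τ i), ?_⟩
  simp only [pauliTensor_eq_piKronecker, piKronecker_mul, hzd, piKronecker_smul]

theorem trace_pauliTensor {σ : Fin n → Fin 4} (hσ : σ ≠ 0) : (pauliTensor σ).trace = 0 := by
  obtain ⟨i, hi⟩ := Function.ne_iff.mp hσ
  rw [pauliTensor_eq_piKronecker, trace_piKronecker]
  exact Finset.prod_eq_zero (Finset.mem_univ i) (trace_pauli hi)

def IsPhasedPauli (M : Matrix (Fin n → Fin 2) (Fin n → Fin 2) ℂ) : Prop :=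
  ∃ (e : ℂ) (σ : Fin n → Fin 4), M = e • pauliTensor σ

theorem isPhasedPauli_one : IsPhasedPauli (1 : Matrix (Fin n → Fin 2) (Fin n → Fin 2) ℂ) :=
  ⟨1, 0, by rw [pauliTensor_zero, one_smul]⟩

namespace IsPhasedPauli

variable {T M M' : Matrix (Fin n → Fin 2) (Fin n → Fin 2) ℂ}

theorem smul (hM : IsPhasedPauli M) (a : ℂ) : IsPhasedPauli (a • M) := by
  obtain ⟨e, σ, rfl⟩ := hM
  exact ⟨a * e, σ, smul_smul a e _⟩

theorem mul (hM : IsPhasedPauli M) (hM' : IsPhasedPauli M') : IsPhasedPauli (M * M') := by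
  obtain ⟨e, σ, rfl⟩ := hM
  obtain ⟨e', σ', rfl⟩ := hM'
  obtain ⟨z, ρ, h⟩ := exists_pauliTensor_mul_eq_smul σ σ'
  exact ⟨e * e' * z, ρ, by rw [smul_mul_smul_comm, h, smul_smul]⟩

theorem list_prod {l : List (Matrix (Fin n → Fin 2) (Fin n → Fin 2) ℂ)}
    (hl : ∀ M ∈ l, IsPhasedPauli M) : IsPhasedPauli l.prod :=
  List.prod_induction _ (fun _ _ => mul) isPhasedPauli_one hl

theorem exists_mul_self_eq_smul_one (hM : IsPhasedPauli M) : ∃ a : ℂ, M * M = a • 1 := by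
  obtain ⟨e, σ, rfl⟩ := hM
  exact ⟨e * e, by rw [smul_mul_smul_comm, pauliTensor_mul_self]⟩

theorem isUnit (hM : IsPhasedPauli M) (h0 : M ≠ 0) : IsUnit M := by
  obtain ⟨e, σ, rfl⟩ := hM
  have he : e ≠ 0 := by rintro rfl; exact h0 (zero_smul ℂ _)
  exact (IsUnit.of_mul_eq_one _ (pauliTensor_mul_self σ)).smul (Units.mk0 e he)

theorem trace_eq_zero (hM : IsPhasedPauli M) (h : ∀ a : ℂ, M ≠ a • 1) : M.trace = 0 := by
  obtain ⟨e, σ, rfl⟩ := hM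
  have hσ : σ ≠ 0 := by rintro rfl; exact h e (by rw [pauliTensor_zero])
  rw [trace_smul, trace_pauliTensor hσ, smul_zero]

theorem mul_self_eq_one (hM : IsPhasedPauli M) (hT : T ≠ 0) (h : T * M = T) : M * M = 1 := by
  obtain ⟨a, ha⟩ := hM.exists_mul_self_eq_smul_one
  have : a = 1 := eq_one_of_mul_smul_eq_self hT (mul_one T) (by rw [← ha, ← mul_assoc, h, h])
  rw [ha, this, one_smul]

theorem commute (hM : IsPhasedPauli M) (hM' : IsPhasedPauli M') (hT : T ≠ 0) (h : T * M = T)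
    (h' : T * M' = T) : Commute M M' := by
  obtain ⟨a, ha⟩ := (hM.mul hM').exists_mul_self_eq_smul_one
  have hMM' :=
    mul_eq_smul_mul_of_mul_self (hM.mul_self_eq_one hT h) (hM'.mul_self_eq_one hT h') ha
  have : a = 1 := eq_one_of_mul_smul_eq_self hT (by rw [← mul_assoc, h', h])
    (by rw [← hMM', ← mul_assoc, h, h'])
  rw [Commute, SemiconjBy, hMM', this, one_smul]

end IsPhasedPauli

end PauliTensor

theorem rank_bound_from_pauli_constraints_general (n N : ℕ)
    (T : Matrix (Fin n → Fin 2) (Fin n → Fin 2) ℂ) (hT : T ≠ 0)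
    (U : Fin N → Matrix (Fin n → Fin 2) (Fin n → Fin 2) ℂ)
    (hpauli : ∀ k, ∃ (ph : ℂ) (σ : Fin n → Fin 4),
      ph ∈ ({1, -1, Complex.I, -Complex.I} : Set ℂ) ∧ U k = ph • pauliTensor σ)
    (hindep : ∀ l : List (Fin N), l ≠ [] → l.Nodup →
      ∀ ph : ℂ, (l.map U).prod ≠ ph • (1 : Matrix (Fin n → Fin 2) (Fin n → Fin 2) ℂ))
    (c : Fin N → ℂ)
    (heq : ∀ k, T * U k = c k • T) :
    (T.rank : ℝ) ≤ (2 ^ n : ℝ) / (2 ^ N : ℝ) := by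
  have hU : ∀ k, IsPhasedPauli (U k) := fun k => by
    obtain ⟨ph, σ, -, hk⟩ := hpauli k
    exact ⟨ph, σ, hk⟩
  have hc : ∀ k, c k ≠ 0 := fun k hk => by
    have hU0 : U k ≠ 0 := by
      simpa using hindep [k] (List.cons_ne_nil _ _) (List.nodup_singleton k) 0
    exact hT (((hU k).isUnit hU0).mul_left_eq_zero.mp (by rw [heq, hk, zero_smul]))
  set Q : Fin N → Matrix (Fin n → Fin 2) (Fin n → Fin 2) ℂ := fun k => (c k)⁻¹ • U k
  have hQ : ∀ k, IsPhasedPauli (Q k) := fun k => (hU k).smul _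
  have hTQ : ∀ k, T * Q k = T := fun k => by
    rw [mul_smul_comm, heq, smul_smul, inv_mul_cancel₀ (hc k), one_smul]
  have htr : ∀ s, s.Sublist ((List.finRange N).map Q) → s ≠ [] → s.prod.trace = 0 := by
    intro _ hs hne
    obtain ⟨s, hsub, rfl⟩ := List.sublist_map_iff.mp hs
    have hUs := IsPhasedPauli.list_prod (l := s.map U) (by simpa using fun k _ => hU k)
    rw [List.prod_map_smul, trace_smul, hUs.trace_eq_zero (hindep s (by simpa using hne)
      ((List.nodup_finRange N).sublist hsub)), smul_zero]
  have hbound := rank_mul_two_pow_le_card (T := T) (l := (List.finRange N).map Q)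
    (List.pairwise_map.mpr <| List.pairwise_of_forall fun j k =>
      (hQ j).commute (hQ k) hT (hTQ j) (hTQ k))
    (by simpa using fun k => (hQ k).mul_self_eq_one hT (hTQ k)) htr (by simpa using hTQ)
  rw [le_div_iff₀ (by positivity)]
  exact_mod_cast (by simpa using hbound)

/-- If a nonzero matrix `T` satisfies `T Uₖ = cₖ T` for `N` independent (phased)
tensor products of Pauli matrices, then `rank T ≤ D / 2^N` with `D = 2^n`. -/
theorem rank_bound_from_pauli_constraints (n N : ℕ)
    (T : Matrix (Fin n → Fin 2) (Fin n → Fin 2) ℂ) (hT : T ≠ 0)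
    (U : Fin N → Matrix (Fin n → Fin 2) (Fin n → Fin 2) ℂ)
    (hpauli : ∀ k, ∃ (ph : ℂ) (σ : Fin n → Fin 4),
      ph ∈ ({1, -1, Complex.I, -Complex.I} : Set ℂ) ∧ U k = ph • pauliTensor σ)
    (hindep : ∀ l : List (Fin N), l ≠ [] → l.Nodup →
      ∀ ph : ℂ, (l.map U).prod ≠ ph • (1 : Matrix (Fin n → Fin 2) (Fin n → Fin 2) ℂ))
    (c : Fin N → ℂ) (hc : ∀ k, ‖c k‖ = 1)
    (heq : ∀ k, T * U k = c k • T) :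
    (T.rank : ℝ) ≤ (2 ^ n : ℝ) / (2 ^ N : ℝ) :=
  rank_bound_from_pauli_constraints_general n N T hT U hpauli hindep c heq
end

section
/- For binary vectors g, g' ∈ {0,1}^q and a q×q binary matrix Γ of 𝔽₂-rank m, the bilinear form (g')ᵀ Γ g can be written modulo 2 as a sum of m expressions each of the form Sym(ĝ'_i, γ_{i1}ĝ_1, …, γ_{iq}ĝ_q) minus m expressions Sym(γ_{i1}ĝ_1, …, γ_{iq}ĝ_q), where ĝ = G⁻¹g, ĝ' = G⁻¹g' for an invertible binary matrix G, γ is the m×q full-row-rank reduction of Γ, and Sym denotes the sum of all pairwise products of its arguments. -/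
/-!
Since `Sym(a, v₁, …, v_k) = a (v₁ + ⋯ + v_k) + Sym(v₁, …, v_k)`, the `i`-th summand on the right
is `ĝ'ᵢ (γ ĝ)ᵢ`. Choose `G` invertible whose last `q - m` columns span the left kernel of `Γ`; then
`GᵀΓG` vanishes below its first `m` rows, which form `γ`, and `(g')ᵀ Γ g = ĝ'ᵀ (GᵀΓG) ĝ` is
exactly `∑_{i<m} ĝ'ᵢ (γ ĝ)ᵢ`.
-/

open Matrix

/-- `Sym(x₁,…,x_k) = ∑_{i<j} xᵢxⱼ` over `𝔽₂`. -/
def sym2Form {k : ℕ} (v : Fin k → ZMod 2) : ZMod 2 :=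
  ∑ p ∈ Finset.univ.filter (fun p : Fin k × Fin k => p.1 < p.2), v p.1 * v p.2

theorem sym2Form_cons {k : ℕ} (a : ZMod 2) (v : Fin k → ZMod 2) :
    sym2Form (Fin.cons a v) = a * ∑ j, v j + sym2Form v := by
  simp only [sym2Form, Finset.sum_filter, Fintype.sum_prod_type, Fin.sum_univ_succ, Fin.cons_zero,
    Fin.cons_succ, Fin.succ_pos, Fin.succ_lt_succ_iff, Fin.not_lt_zero, if_true, if_false,
    zero_add, Finset.mul_sum]

theorem Submodule.exists_basis_fin_apply_mem_of_le {K V : Type*} [DivisionRing K] [AddCommGroup V]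
    [Module K V] [FiniteDimensional K V] (W : Submodule K V) {r q : ℕ}
    (hV : Module.finrank K V = q) (hW : Module.finrank K W + r = q) :
    ∃ b : Module.Basis (Fin q) K V, ∀ i : Fin q, r ≤ (i : ℕ) → b i ∈ W := by
  obtain ⟨U, hUW⟩ := W.exists_isCompl
  have hU : Module.finrank K U = r := by
    have := Submodule.finrank_add_eq_of_isCompl hUW
    omega
  let e : Fin r ⊕ Fin (Module.finrank K W) ≃ Fin q := finSumFinEquiv.trans (finCongr (by omega))
  refine ⟨(((Module.finBasisOfFinrankEq K U hU).prod (Module.finBasis K W)).map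
    (Submodule.prodEquivOfIsCompl U W hUW.symm)).reindex e, fun i hi => ?_⟩
  have he : e.symm i = Sum.inr ⟨i - r, by omega⟩ := by
    rw [Equiv.symm_apply_eq]
    ext
    simp [e]
    omega
  simp [he]

theorem Matrix.exists_transpose_mul_rows_eq_zero {K n : Type*} [Field K] [Fintype n] {q : ℕ}
    (A : Matrix (Fin q) n K) :
    ∃ G Ginv : Matrix (Fin q) (Fin q) K, G * Ginv = 1 ∧ Ginv * G = 1 ∧
      ∀ i : Fin q, A.rank ≤ (i : ℕ) → (Gᵀ * A) i = 0 := by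
  have hker : Module.finrank K (LinearMap.ker A.vecMulLinear) + A.rank = q := by
    rw [← rank_transpose, rank, mulVecLin_transpose, add_comm,
      LinearMap.finrank_range_add_finrank_ker]
    simp
  obtain ⟨b, hb⟩ := (LinearMap.ker A.vecMulLinear).exists_basis_fin_apply_mem_of_le (by simp) hker
  refine ⟨(Pi.basisFun K (Fin q)).toMatrix b, b.toMatrix (Pi.basisFun K (Fin q)),
    Module.Basis.toMatrix_mul_toMatrix_flip _ _, Module.Basis.toMatrix_mul_toMatrix_flip _ _,
    fun i hi => ?_⟩
  have hrow : (((Pi.basisFun K (Fin q)).toMatrix b)ᵀ * A) i = b i ᵥ* A := by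
    ext j
    simp [mul_apply, vecMul, dotProduct, Module.Basis.toMatrix_apply]
  exact hrow.trans (hb i hi)

theorem Matrix.rank_submatrix_castLE_of_rows_eq_zero {K n : Type*} [Field K] [Fintype n]
    {m r : ℕ} (B : Matrix (Fin m) n K) (h : r ≤ m) (hB : ∀ i : Fin m, r ≤ (i : ℕ) → B i = 0) :
    (B.submatrix (Fin.castLE h) id).rank = B.rank := by
  refine le_antisymm (rank_submatrix_le _ _ _) ?_
  rw [rank_eq_finrank_span_row, rank_eq_finrank_span_row]
  refine Submodule.finrank_mono (Submodule.span_le.2 ?_)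
  rintro _ ⟨i, rfl⟩
  by_cases hi : (i : ℕ) < r
  · exact Submodule.subset_span ⟨⟨i, hi⟩, rfl⟩
  · simp [row, hB i (not_lt.1 hi)]

theorem Matrix.mulVec_dotProduct_mulVec_mulVec {R m n : Type*} [CommSemiring R] [Fintype m]
    [Fintype n] (G : Matrix m n R) (A : Matrix m m R) (x y : n → R) :
    (G *ᵥ y) ⬝ᵥ (A *ᵥ (G *ᵥ x)) = y ⬝ᵥ ((Gᵀ * A * G) *ᵥ x) := by
  rw [← mulVec_mulVec, ← mulVec_mulVec, dotProduct_mulVec y Gᵀ, vecMul_transpose]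

/-- The bilinear form `(g')ᵀ Γ g` over `𝔽₂` decomposes, after an invertible change
of basis `ĝ = G⁻¹g`, into `rank Γ` inter-site symmetric expressions minus
`rank Γ` on-site symmetric expressions built from the full-row-rank reduction
`γ` of `Γ`. -/
theorem bilinear_form_sym_decomposition (q : ℕ)
    (Γ : Matrix (Fin q) (Fin q) (ZMod 2)) (hle : Γ.rank ≤ q) :
    ∃ (G Ginv : Matrix (Fin q) (Fin q) (ZMod 2))
      (γ : Matrix (Fin Γ.rank) (Fin q) (ZMod 2)),
      G * Ginv = 1 ∧ Ginv * G = 1 ∧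
      (∀ i : Fin Γ.rank, ∀ j, (Gᵀ * Γ * G) (Fin.castLE hle i) j = γ i j) ∧
      (∀ i : Fin q, Γ.rank ≤ (i : ℕ) → ∀ j, (Gᵀ * Γ * G) i j = 0) ∧
      γ.rank = Γ.rank ∧
      ∀ g g' : Fin q → ZMod 2,
        (∑ j, ∑ k, g' j * Γ j k * g k) =
          ∑ i : Fin Γ.rank,
            (sym2Form (Fin.cons (Ginv.mulVec g' (Fin.castLE hle i))
                (fun j => γ i j * Ginv.mulVec g j))
              - sym2Form (fun j => γ i j * Ginv.mulVec g j)) := by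
  obtain ⟨G, Ginv, hGGinv, hGinvG, hrow⟩ := Γ.exists_transpose_mul_rows_eq_zero
  have hB : ∀ i : Fin q, Γ.rank ≤ (i : ℕ) → (Gᵀ * Γ * G) i = 0 := fun i hi => by
    ext j
    rw [mul_apply, hrow i hi]
    simp
  have hG : IsUnit G.det := isUnit_det_of_right_inverse hGGinv
  refine ⟨G, Ginv, (Gᵀ * Γ * G).submatrix (Fin.castLE hle) id, hGGinv, hGinvG, fun _ _ => rfl,
    fun i hi j => congrFun (hB i hi) j, ?_, fun g g' => ?_⟩
  · rw [rank_submatrix_castLE_of_rows_eq_zero _ hle hB, rank_mul_eq_left_of_isUnit_det _ _ hG,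
      rank_mul_eq_right_of_isUnit_det _ _ (by rwa [det_transpose])]
  have hcancel : ∀ x, Ginv *ᵥ (G *ᵥ x) = x := fun x => by
    rw [mulVec_mulVec, hGinvG, one_mulVec]
  obtain ⟨x, rfl⟩ : ∃ x, g = G *ᵥ x := ⟨Ginv *ᵥ g, by rw [mulVec_mulVec, hGGinv, one_mulVec]⟩
  obtain ⟨y, rfl⟩ : ∃ y, g' = G *ᵥ y := ⟨Ginv *ᵥ g', by rw [mulVec_mulVec, hGGinv, one_mulVec]⟩
  simp only [hcancel, sym2Form_cons, add_sub_cancel_right]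
  calc ∑ j, ∑ k, (G *ᵥ y) j * Γ j k * (G *ᵥ x) k
      = (G *ᵥ y) ⬝ᵥ (Γ *ᵥ (G *ᵥ x)) := by simp only [dotProduct, mulVec, Finset.mul_sum, mul_assoc]
    _ = ∑ i, y i * ∑ j, (Gᵀ * Γ * G) i j * x j := mulVec_dotProduct_mulVec_mulVec G Γ x y
    _ = ∑ i : Fin Γ.rank, y (Fin.castLE hle i) * ∑ j, (Gᵀ * Γ * G) (Fin.castLE hle i) j * x j := by
      refine (Fintype.sum_of_injective _ (Fin.castLE_injective hle) _ _ (fun i hi => ?_)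
        fun _ => rfl).symm
      rw [hB i (not_lt.1 fun h => hi ⟨⟨i, h⟩, rfl⟩)]
      simp
end

section
/- On a spin chain of L unit cells with q spin-1/2's each (PBC), define O^r_α = ∏_{1≤k<α}(Z^{r+1}_k Z^r_k)^{P_{kα}} · X^r_α · ∏_{α<l≤q}(Z^r_l Z^{r-1}_l)^{P_{αl}} for binary parameters P_{ij} (i<j). Then [O^r_α, O^{r'}_{α'}] = 0 for all r, r', α, α'. -/
open Matrix

/-- Pauli `Z` on site `s` of the periodic chain. -/
noncomputable def Zop (L q : ℕ) [NeZero L] (s : ZMod L × Fin q) :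
    Matrix ((ZMod L × Fin q) → Fin 2) ((ZMod L × Fin q) → Fin 2) ℂ :=
  Matrix.diagonal (fun x => (-1 : ℂ) ^ ((x s : ℕ)))

/-- Pauli `X` on site `s` of the periodic chain. -/
noncomputable def Xop (L q : ℕ) [NeZero L] (s : ZMod L × Fin q) :
    Matrix ((ZMod L × Fin q) → Fin 2) ((ZMod L × Fin q) → Fin 2) ℂ :=
  fun x y => if x = Function.update y s (1 - y s) then 1 else 0

/-- The cocycle stabilizer
`O^r_α = ∏_{k<α}(Z^{r+1}_k Z^r_k)^{P_{kα}} · X^r_α · ∏_{α<l}(Z^r_l Z^{r−1}_l)^{P_{αl}}`,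
written as the (diagonal) product of its `Z` factors times its `X` factor. -/
noncomputable def Ocal (L q : ℕ) [NeZero L] (P : Fin q → Fin q → ℕ)
    (r : ZMod L) (α : Fin q) :
    Matrix ((ZMod L × Fin q) → Fin 2) ((ZMod L × Fin q) → Fin 2) ℂ :=
  Matrix.diagonal (fun x =>
      (∏ k ∈ Finset.univ.filter (fun k : Fin q => k < α),
        (-1 : ℂ) ^ (P k α * ((x (r + 1, k) : ℕ) + (x (r, k) : ℕ))))
      * ∏ l ∈ Finset.univ.filter (fun l : Fin q => α < l),
        (-1 : ℂ) ^ (P α l * ((x (r, l) : ℕ) + (x (r - 1, l) : ℕ))))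
    * Xop L q (r, α)

/-!
Each stabilizer has the form `D_f · X_s`: a diagonal matrix times the permutation matrix of the
flip of spin `s`. The diagonal `f` of a string of `Z`'s with `a v` factors at site `v` satisfies
`f (flip t x) = (-1)^(a t) f x`, so moving `X_s` past `D_g` costs `(-1)^(b s)` and
`D_f X_s`, `D_g X_t` commute as soon as `a t + b s` is even. For the cocycle stabilizers the two
counts agree: `O^r_α` carries `P_{α'α}` factors at `(r', α')` (for `α' < α`) once for each
`r' ∈ {r, r + 1}`, and `O^{r'}_{α'}` carries exactly as many at `(r, α)`, once for each
`r ∈ {r', r' - 1}`; symmetrically for `α < α'`.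
-/

namespace Matrix

variable {n R : Type*} [Fintype n] [DecidableEq n]

theorem toMatrix_toPEquiv_mul_diagonal [NonAssocSemiring R] (e : Equiv.Perm n) (g : n → R) :
    e.toPEquiv.toMatrix * diagonal g = diagonal (g ∘ e) * e.toPEquiv.toMatrix := by
  rw [PEquiv.toMatrix_toPEquiv_mul, PEquiv.mul_toMatrix_toPEquiv]
  ext i j
  simp only [submatrix_apply, diagonal_apply, id, Function.comp_apply, Equiv.eq_symm_apply]

theorem commute_diagonal_mul_toMatrix_toPEquiv [CommSemiring R] {f g : n → R}
    {e e' : Equiv.Perm n} (he : Commute e e') (hfg : f * g ∘ e = g * f ∘ e') :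
    Commute (diagonal f * e.toPEquiv.toMatrix) (diagonal g * e'.toPEquiv.toMatrix) := by
  have product : ∀ (u v : n → R) (π π' : Equiv.Perm n),
      diagonal u * π.toPEquiv.toMatrix * (diagonal v * π'.toPEquiv.toMatrix) =
        diagonal (u * v ∘ π) * (π' * π).toPEquiv.toMatrix := by
    intro u v π π'
    rw [Equiv.Perm.mul_def, Equiv.toPEquiv_trans, PEquiv.toMatrix_trans, Matrix.mul_assoc,
      ← Matrix.mul_assoc π.toPEquiv.toMatrix, toMatrix_toPEquiv_mul_diagonal, Matrix.mul_assoc,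
      ← Matrix.mul_assoc, diagonal_mul_diagonal]
    rfl
  rw [Commute, SemiconjBy, product, product, hfg, he.eq]

end Matrix

section FlipSpin

variable {σ R : Type*} [DecidableEq σ] [CommRing R]

def flipSpin (s : σ) : Equiv.Perm (σ → Fin 2) :=
  Function.Involutive.toPerm (fun x => Function.update x s (1 - x s)) fun x => by
    ext v
    rcases eq_or_ne v s with rfl | hv
    · simp
    · simp [Function.update_of_ne hv]

theorem flipSpin_apply (s : σ) (x : σ → Fin 2) :
    flipSpin s x = Function.update x s (1 - x s) := rfl

theorem flipSpin_flipSpin (s : σ) (x : σ → Fin 2) : flipSpin s (flipSpin s x) = x :=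
  Function.Involutive.toPerm_involutive _ x

theorem commute_flipSpin (s t : σ) : Commute (flipSpin s) (flipSpin t) := by
  rcases eq_or_ne s t with rfl | hst
  · rfl
  ext x : 1
  simp only [Equiv.Perm.mul_apply, flipSpin_apply, Function.update_of_ne hst,
    Function.update_of_ne hst.symm, Function.update_comm hst]

def HasFlipSign (f : (σ → Fin 2) → R) (a : σ → ℕ) : Prop :=
  ∀ t x, f (flipSpin t x) = (-1) ^ a t * f x

namespace HasFlipSign

theorem neg_one_pow_mul_apply (c : ℕ) (v : σ) :
    HasFlipSign (fun x => (-1 : R) ^ (c * (x v : ℕ))) (Pi.single v c) := by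
  intro t x
  rcases eq_or_ne v t with rfl | hvt
  · have hx : x v = 0 ∨ x v = 1 := by omega
    rcases hx with hx | hx <;>
      simp [flipSpin_apply, hx, ← pow_add, ← two_mul, pow_mul]
  · simp [flipSpin_apply, Function.update_of_ne hvt, hvt.symm]

theorem mul {f g : (σ → Fin 2) → R} {a b : σ → ℕ} (hf : HasFlipSign f a)
    (hg : HasFlipSign g b) : HasFlipSign (fun x => f x * g x) (a + b) := by
  intro t x
  dsimp only
  rw [hf, hg, Pi.add_apply, pow_add]
  ring

theorem prod {ι : Type*} {s : Finset ι} {f : ι → (σ → Fin 2) → R} {a : ι → σ → ℕ}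
    (h : ∀ i ∈ s, HasFlipSign (f i) (a i)) :
    HasFlipSign (fun x => ∏ i ∈ s, f i x) (∑ i ∈ s, a i) := by
  intro t x
  dsimp only
  rw [Finset.prod_congr rfl fun i hi => h i hi t x, Finset.prod_mul_distrib,
    Finset.prod_pow_eq_pow_sum, Finset.sum_apply]

theorem neg_one_pow_mul_add_apply (c : ℕ) (v w : σ) :
    HasFlipSign (fun x => (-1 : R) ^ (c * ((x v : ℕ) + (x w : ℕ))))
      (Pi.single v c + Pi.single w c) := by
  simp only [Nat.mul_add, pow_add]
  exact (neg_one_pow_mul_apply c v).mul (neg_one_pow_mul_apply c w)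

end HasFlipSign

theorem commute_diagonal_mul_flipSpin [Fintype σ] {f g : (σ → Fin 2) → R} {a b : σ → ℕ} {s t : σ}
    (hf : HasFlipSign f a) (hg : HasFlipSign g b) (hst : Even (a t + b s)) :
    Commute (diagonal f * (flipSpin s).toPEquiv.toMatrix)
      (diagonal g * (flipSpin t).toPEquiv.toMatrix) := by
  refine commute_diagonal_mul_toMatrix_toPEquiv (commute_flipSpin s t) (funext fun x => ?_)
  simp only [Pi.mul_apply, Function.comp_apply, hf t x, hg s x,
    neg_one_pow_congr (Nat.even_add.mp hst)]
  ring

end FlipSpin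

theorem Xop_eq_toMatrix_flipSpin (L q : ℕ) [NeZero L] (s : ZMod L × Fin q) :
    Xop L q s = (flipSpin s).toPEquiv.toMatrix := by
  ext x y
  simp only [Xop, PEquiv.toMatrix_apply, Equiv.toPEquiv_apply, Option.mem_def, Option.some_inj,
    ← flipSpin_apply]
  exact if_congr ⟨fun h => by rw [h, flipSpin_flipSpin], fun h => by rw [← h, flipSpin_flipSpin]⟩
    rfl rfl

theorem sum_pi_single_mk_apply {ι κ M : Type*} [DecidableEq ι] [DecidableEq κ] [AddCommMonoid M]
    (s : Finset κ) (c : κ → M) (i j : ι) (k : κ) :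
    (∑ l ∈ s, Pi.single (i, l) (c l) : ι × κ → M) (j, k) = if j = i ∧ k ∈ s then c k else 0 := by
  rw [Finset.sum_apply]
  simp only [Pi.single_apply, Prod.ext_iff]
  by_cases hji : j = i
  · simp only [hji, true_and, Finset.sum_ite_eq]
  · simp only [hji, false_and, if_false, Finset.sum_const_zero]

-- For `L = 1` the two sites `r + 1, r` (resp. `r, r - 1`) of a factor coincide and their exponents add.
open Finset in
def cocycleExponent (L q : ℕ) (P : Fin q → Fin q → ℕ) (r : ZMod L) (α : Fin q) :
    ZMod L × Fin q → ℕ :=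
  ∑ k ∈ univ.filter (· < α), (Pi.single (r + 1, k) (P k α) + Pi.single (r, k) (P k α)) +
    ∑ l ∈ univ.filter (α < ·), (Pi.single (r, l) (P α l) + Pi.single (r - 1, l) (P α l))

theorem cocycleExponent_symm (L q : ℕ) (P : Fin q → Fin q → ℕ) (r r' : ZMod L) (α α' : Fin q) :
    cocycleExponent L q P r α (r', α') = cocycleExponent L q P r' α' (r, α) := by
  simp only [cocycleExponent, Finset.sum_add_distrib, Pi.add_apply, sum_pi_single_mk_apply,
    Finset.mem_filter, Finset.mem_univ, true_and]
  have hsucc : r' = r + 1 ↔ r = r' - 1 := by rw [eq_sub_iff_add_eq, eq_comm]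
  have hpred : r' = r - 1 ↔ r = r' + 1 := by rw [eq_sub_iff_add_eq, eq_comm]
  simp only [hsucc, hpred, @eq_comm _ r' r]
  ring

theorem exists_hasFlipSign_Ocal_eq (L q : ℕ) [NeZero L] (P : Fin q → Fin q → ℕ) (r : ZMod L)
    (α : Fin q) : ∃ f : (ZMod L × Fin q → Fin 2) → ℂ, HasFlipSign f (cocycleExponent L q P r α) ∧
      Ocal L q P r α = diagonal f * Xop L q (r, α) :=
  ⟨_, (HasFlipSign.prod fun _ _ => .neg_one_pow_mul_add_apply _ _ _).mul
    (HasFlipSign.prod fun _ _ => .neg_one_pow_mul_add_apply _ _ _), rfl⟩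

theorem cocycle_stabilizers_commute_general (L q : ℕ) [NeZero L]
    (P : Fin q → Fin q → ℕ) :
    ∀ (r r' : ZMod L) (α α' : Fin q),
      Ocal L q P r α * Ocal L q P r' α' = Ocal L q P r' α' * Ocal L q P r α := by
  intro r r' α α'
  obtain ⟨f, hf, hO⟩ := exists_hasFlipSign_Ocal_eq L q P r α
  obtain ⟨g, hg, hO'⟩ := exists_hasFlipSign_Ocal_eq L q P r' α'
  rw [hO, hO', Xop_eq_toMatrix_flipSpin, Xop_eq_toMatrix_flipSpin]
  exact (commute_diagonal_mul_flipSpin hf hg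
    (cocycleExponent_symm L q P r r' α α' ▸ Even.add_self _)).eq

/-- The cocycle stabilizers of the `(ℤ₂)^q` SPT Hamiltonian pairwise commute. -/
theorem cocycle_stabilizers_commute (L q : ℕ) [NeZero L]
    (P : Fin q → Fin q → ℕ) (hP : ∀ i j, P i j ≤ 1) :
    ∀ (r r' : ZMod L) (α α' : Fin q),
      Ocal L q P r α * Ocal L q P r' α' = Ocal L q P r' α' * Ocal L q P r α :=
  cocycle_stabilizers_commute_general L q P
end

section
/- With the operators O^r_α of the (ℤ₂)^q cocycle Hamiltonian as above, the qL operators {O^r_α : 0 ≤ r < L, 1 ≤ α ≤ q} are independent in the Pauli group (no nonempty product of a subset equals a scalar multiple of the identity); consequently the Hamiltonian H = −∑_{r,α} O^r_α has a unique ground state, the common +1 eigenspace being one-dimensional (dimension 2^{qL}/2^{qL} = 1). -/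
open Matrix

/-! Each `O^r_α` acts on configurations `x ∈ (ℤ₂)^{qL}` as `(O v)(x) = ±v(x + δ_{r,α})`: a
signed translation. A product over a nonempty set of sites translates by a nonzero vector, so it
has zero diagonal and cannot be a scalar. If `g` is a nowhere vanishing common `+1` eigenvector,
then for any other one `v` the ratio `v / g` is invariant under the translations `δ_{r,α}`, which
generate `(ℤ₂)^{qL}`, so `v` is a multiple of `g`. Such a `g` is `(-1)^{B(x,x)}` for the
bilinear form `B = cocycleForm P` over `ℤ₂`: the phase of `O^r_α` is the polarization
`B(x, δ_{r,α}) + B(δ_{r,α}, x)` and `B(δ_{r,α}, δ_{r,α}) = 0`. -/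

open Fin.CommRing

section TwistedShift

variable {K A : Type*} [CommRing K] [AddMonoid A] [Fintype A]

def IsTwistedShift (M : Matrix A A K) (e : A) : Prop :=
  ∃ c : A → K, (∀ x, c x ≠ 0) ∧ ∀ v x, (M *ᵥ v) x = c x * v (x + e)

theorem isTwistedShift_one [DecidableEq A] [Nontrivial K] :
    IsTwistedShift (1 : Matrix A A K) 0 :=
  ⟨fun _ => 1, fun _ => one_ne_zero, fun v x => by simp⟩

theorem IsTwistedShift.mul [NoZeroDivisors K] {M N : Matrix A A K} {e f : A}
    (hM : IsTwistedShift M e) (hN : IsTwistedShift N f) : IsTwistedShift (M * N) (e + f) := by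
  obtain ⟨c, hc, hMc⟩ := hM
  obtain ⟨d, hd, hNd⟩ := hN
  refine ⟨fun x => c x * d (x + e), fun x => mul_ne_zero (hc x) (hd _), fun v x => ?_⟩
  rw [← mulVec_mulVec, hMc, hNd, add_assoc, mul_assoc]

theorem IsTwistedShift.list_prod [DecidableEq A] [Nontrivial K] [NoZeroDivisors K] {ι : Type*}
    {M : ι → Matrix A A K} {e : ι → A} {l : List ι}
    (hl : ∀ i ∈ l, IsTwistedShift (M i) (e i)) :
    IsTwistedShift (l.map M).prod (l.map e).sum := by
  induction l with
  | nil => exact isTwistedShift_one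
  | cons i l ih =>
    simp only [List.map_cons, List.prod_cons, List.sum_cons]
    exact (hl i List.mem_cons_self).mul (ih fun j hj => hl j (List.mem_cons_of_mem i hj))

theorem IsTwistedShift.ne_smul_one [DecidableEq A] {M : Matrix A A K} {e : A}
    (hM : IsTwistedShift M e) (he : e ≠ 0) (a : K) : M ≠ a • 1 := by
  rintro rfl
  obtain ⟨c, hc, hMc⟩ := hM
  have h := hMc (Pi.single e 1) 0
  rw [smul_mulVec, one_mulVec, zero_add, Pi.single_eq_same, mul_one, Pi.smul_apply,
    Pi.single_eq_of_ne (Ne.symm he), smul_zero] at h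
  exact hc 0 h.symm

end TwistedShift

theorem eq_of_add_invariant_of_closure_eq_top {ι A β : Type*} [AddGroup A] {e : ι → A}
    (he : AddSubgroup.closure (Set.range e) = ⊤) {w : A → β} (hw : ∀ i x, w (x + e i) = w x)
    (x y : A) : w x = w y := by
  have hinv : ∀ a ∈ AddSubgroup.closure (Set.range e), ∀ x, w (x + a) = w x := by
    intro a ha
    induction ha using AddSubgroup.closure_induction with
    | mem a ha => obtain ⟨i, rfl⟩ := ha; exact hw i
    | zero => simp
    | add a b _ _ iha ihb => intro x; rw [← add_assoc, ihb, iha]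
    | neg a _ iha => intro x; rw [← iha, neg_add_cancel_right]
  have := hinv (-x + y) (he ▸ AddSubgroup.mem_top _) x
  rwa [add_neg_cancel_left, eq_comm] at this

theorem iInf_eigenspace_one_eq_span {K A ι : Type*} [Field K] [AddGroup A] [Fintype A]
    {M : ι → Matrix A A K} {e : ι → A} (he : AddSubgroup.closure (Set.range e) = ⊤)
    {c : ι → A → K} (hM : ∀ i v x, (M i *ᵥ v) x = c i x * v (x + e i))
    {g : A → K} (hg0 : ∀ x, g x ≠ 0) (hg : ∀ i, M i *ᵥ g = g) :
    ⨅ i, Module.End.eigenspace (M i).mulVecLin 1 = Submodule.span K {g} := by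
  have mem_iff :
      ∀ v, v ∈ ⨅ i, Module.End.eigenspace (M i).mulVecLin 1 ↔ ∀ i, M i *ᵥ v = v := by
    simp [Submodule.mem_iInf]
  refine le_antisymm (fun v hv => ?_) ?_
  · have hv := (mem_iff v).1 hv
    have hratio : ∀ i x, v (x + e i) / g (x + e i) = v x / g x := by
      intro i x
      have hvx := congrFun (hv i) x
      have hgx := congrFun (hg i) x
      rw [hM] at hvx hgx
      have hc : c i x ≠ 0 := left_ne_zero_of_mul (hgx ▸ hg0 x)
      rw [← hvx, ← hgx, mul_div_mul_left _ _ hc]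
    refine Submodule.mem_span_singleton.2 ⟨v 0 / g 0, funext fun x => ?_⟩
    rw [Pi.smul_apply, smul_eq_mul,
      ← eq_of_add_invariant_of_closure_eq_top (w := fun x => v x / g x) he hratio x 0,
      div_mul_cancel₀ _ (hg0 x)]
  · rw [Submodule.span_le, Set.singleton_subset_iff]
    exact (mem_iff g).2 hg

def fin2Sign {R : Type*} [Monoid R] [HasDistribNeg R] (a : Fin 2) : R := (-1) ^ (a : ℕ)

section Fin2Sign
variable {R : Type*} [Ring R]

theorem neg_one_pow_eq_fin2Sign (n : ℕ) : (-1 : R) ^ n = fin2Sign (n : Fin 2) := by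
  rw [fin2Sign, Fin.val_natCast, neg_one_pow_eq_pow_mod_two]

theorem fin2Sign_add (a b : Fin 2) : fin2Sign (a + b) = (fin2Sign a * fin2Sign b : R) := by
  fin_cases a <;> fin_cases b <;> simp [fin2Sign]

theorem fin2Sign_mul_self (a : Fin 2) : fin2Sign a * fin2Sign a = (1 : R) := by
  fin_cases a <;> simp [fin2Sign]

theorem fin2Sign_ne_zero [Nontrivial R] (a : Fin 2) : (fin2Sign a : R) ≠ 0 :=
  ((isUnit_neg_one).pow _).ne_zero

end Fin2Sign

theorem update_one_sub_eq_add_single {ι : Type*} [DecidableEq ι] (y : ι → Fin 2) (s : ι) :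
    Function.update y s (1 - y s) = y + Pi.single s 1 := by
  ext t
  rcases eq_or_ne t s with rfl | h
  · simp only [Function.update_self, Pi.add_apply, Pi.single_eq_same]
    generalize y t = a
    revert a; decide
  · simp [Function.update_of_ne h, Pi.single_eq_of_ne h]

section CocycleForm
variable {L q : ℕ} [NeZero L]

theorem Xop_mulVec (s : ZMod L × Fin q)
    (v : ((ZMod L × Fin q) → Fin 2) → ℂ) (x : (ZMod L × Fin q) → Fin 2) :
    (Xop L q s *ᵥ v) x = v (x + Pi.single s 1) := by
  have hflip : ∀ y, x = Function.update y s (1 - y s) ↔ y = x + Pi.single s 1 := by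
    intro y
    have hd : (Pi.single s 1 : (ZMod L × Fin q) → Fin 2) + Pi.single s 1 = 0 := by
      rw [← Pi.single_add, show (1 + 1 : Fin 2) = 0 from rfl, Pi.single_zero]
    rw [update_one_sub_eq_add_single]
    constructor <;> rintro rfl <;> rw [add_assoc, hd, add_zero]
  simp [mulVec, dotProduct, Xop, hflip]

def cocycleForm (P : Fin q → Fin q → ℕ) (a b : ZMod L × Fin q → Fin 2) : Fin 2 :=
  ∑ r : ZMod L, ∑ l : Fin q, ∑ k with k < l,
    (P k l : Fin 2) * (a (r + 1, k) + a (r, k)) * b (r, l)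

theorem cocycleForm_add_left (P : Fin q → Fin q → ℕ) (a a' b : ZMod L × Fin q → Fin 2) :
    cocycleForm P (a + a') b = cocycleForm P a b + cocycleForm P a' b := by
  simp only [cocycleForm, ← Finset.sum_add_distrib, Pi.add_apply]
  congr! 3; ring

theorem cocycleForm_add_right (P : Fin q → Fin q → ℕ) (a b b' : ZMod L × Fin q → Fin 2) :
    cocycleForm P a (b + b') = cocycleForm P a b + cocycleForm P a b' := by
  simp only [cocycleForm, ← Finset.sum_add_distrib, Pi.add_apply]
  congr! 3; ring

theorem cocycleForm_single_right (P : Fin q → Fin q → ℕ) (x : ZMod L × Fin q → Fin 2)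
    (r : ZMod L) (α : Fin q) :
    cocycleForm P x (Pi.single (r, α) 1) =
      ∑ k with k < α, (P k α : Fin 2) * (x (r + 1, k) + x (r, k)) := by
  simp [cocycleForm, Pi.single_apply, Finset.sum_ite_irrel, ite_and]

theorem cocycleForm_single_left (P : Fin q → Fin q → ℕ) (x : ZMod L × Fin q → Fin 2)
    (r : ZMod L) (α : Fin q) :
    cocycleForm P (Pi.single (r, α) 1) x =
      ∑ l with α < l, (P α l : Fin 2) * (x (r, l) + x (r - 1, l)) := by
  simp only [cocycleForm, add_mul, mul_add, Finset.sum_add_distrib]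
  simp [Pi.single_apply, ite_and, ← eq_sub_iff_add_eq, Finset.sum_filter]

theorem cocycleForm_single_single (P : Fin q → Fin q → ℕ) (r : ZMod L) (α : Fin q) :
    cocycleForm P (Pi.single (r, α) 1) (Pi.single (r, α) 1) = 0 := by
  rw [cocycleForm_single_right]
  refine Finset.sum_eq_zero fun k hk => ?_
  have hk : k ≠ α := (Finset.mem_filter.1 hk).2.ne
  simp [hk]

theorem Ocal_mulVec (P : Fin q → Fin q → ℕ) (s : ZMod L × Fin q)
    (v : (ZMod L × Fin q → Fin 2) → ℂ) (x : ZMod L × Fin q → Fin 2) :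
    (Ocal L q P s.1 s.2 *ᵥ v) x =
      fin2Sign (cocycleForm P x (Pi.single s 1) + cocycleForm P (Pi.single s 1) x) *
        v (x + Pi.single s 1) := by
  obtain ⟨r, α⟩ := s
  rw [Ocal, ← mulVec_mulVec, mulVec_diagonal, Xop_mulVec, cocycleForm_single_right,
    cocycleForm_single_left, Finset.prod_pow_eq_pow_sum, Finset.prod_pow_eq_pow_sum, ← pow_add,
    neg_one_pow_eq_fin2Sign]
  push_cast
  rfl

theorem isTwistedShift_Ocal (P : Fin q → Fin q → ℕ) (s : ZMod L × Fin q) :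
    IsTwistedShift (Ocal L q P s.1 s.2) (Pi.single s 1) :=
  ⟨_, fun _ => fin2Sign_ne_zero _, Ocal_mulVec P s⟩

def cocycleState (P : Fin q → Fin q → ℕ) (x : ZMod L × Fin q → Fin 2) : ℂ :=
  fin2Sign (cocycleForm P x x)

theorem Ocal_mulVec_cocycleState (P : Fin q → Fin q → ℕ) (s : ZMod L × Fin q) :
    Ocal L q P s.1 s.2 *ᵥ cocycleState P = cocycleState P := by
  funext x
  obtain ⟨r, α⟩ := s
  rw [Ocal_mulVec, cocycleState, cocycleState, cocycleForm_add_left, cocycleForm_add_right,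
    cocycleForm_add_right, cocycleForm_single_single, add_zero, add_assoc, fin2Sign_add _ (_ + _),
    mul_left_comm, fin2Sign_mul_self, mul_one]

end CocycleForm

theorem closure_range_single_one {ι : Type*} [Finite ι] [DecidableEq ι] :
    AddSubgroup.closure (Set.range fun i : ι => (Pi.single i 1 : ι → Fin 2)) = ⊤ := by
  refine eq_top_iff.2 fun f _ =>
    Pi.single_induction _ f (zero_mem _) (fun _ _ => add_mem) fun i m => ?_
  fin_cases m
  · simp
  · exact AddSubgroup.subset_closure ⟨i, rfl⟩

theorem cocycle_stabilizers_independent_unique_gs_general (L q : ℕ) [NeZero L]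
    (P : Fin q → Fin q → ℕ) :
    (∀ s : Finset (ZMod L × Fin q), s.Nonempty → ∀ cph : ℂ,
      (s.toList.map (fun p => Ocal L q P p.1 p.2)).prod ≠
        cph • (1 : Matrix ((ZMod L × Fin q) → Fin 2) ((ZMod L × Fin q) → Fin 2) ℂ)) ∧
    Module.finrank ℂ
      ↥(⨅ p : ZMod L × Fin q,
        Module.End.eigenspace (Ocal L q P p.1 p.2).mulVecLin 1) = 1 := by
  refine ⟨fun s hs cph => ?_, ?_⟩
  · have hshift := IsTwistedShift.list_prod (M := fun p : ZMod L × Fin q => Ocal L q P p.1 p.2)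
      (e := fun p => Pi.single p 1) (l := s.toList) fun p _ => isTwistedShift_Ocal P p
    rw [Finset.sum_map_toList] at hshift
    obtain ⟨p, hp⟩ := hs
    refine hshift.ne_smul_one (fun h => ?_) cph
    simpa [Finset.sum_apply, hp] using congrFun h p
  · rw [iInf_eigenspace_one_eq_span closure_range_single_one (Ocal_mulVec P)
      (fun x => fin2Sign_ne_zero _) (Ocal_mulVec_cocycleState P)]
    exact finrank_span_singleton fun h => fin2Sign_ne_zero (R := ℂ) _ (congrFun h 0)

/-- The `qL` cocycle stabilizers are independent in the Pauli group (no nonempty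
product of a subset is a scalar multiple of the identity); consequently their
common `+1` eigenspace — the ground space of `H = −∑ O^r_α` — is
one-dimensional. -/
theorem cocycle_stabilizers_independent_unique_gs (L q : ℕ) [NeZero L]
    (P : Fin q → Fin q → ℕ) (hP : ∀ i j, P i j ≤ 1) :
    (∀ s : Finset (ZMod L × Fin q), s.Nonempty → ∀ cph : ℂ,
      (s.toList.map (fun p => Ocal L q P p.1 p.2)).prod ≠
        cph • (1 : Matrix ((ZMod L × Fin q) → Fin 2) ((ZMod L × Fin q) → Fin 2) ℂ)) ∧
    Module.finrank ℂ
      ↥(⨅ p : ZMod L × Fin q,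
        Module.End.eigenspace (Ocal L q P p.1 p.2).mulVecLin 1) = 1 :=
  cocycle_stabilizers_independent_unique_gs_general L q P
end
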